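/- arXiv:0812.2311 — 2 statements merged into one kernel-verified Lean document; each statement's English description precedes it below -/
import Mathlib

section
/- Let φ : B(K) → B(H) be a positive linear map, ξ ∈ K and x ∈ H unit vectors, λ > 0 with φ(ξξ*)x = λx. Define B ∈ B(K,H) by Bη = λ^{-1/2} φ(ηξ*)x and ψ(X) = BXB*. Then φ − ψ is a positive map if and only if for all η ∈ K and y ∈ H: |⟨y, φ(ηξ*)x⟩|² ≤ ⟨x, φ(ξξ*)x⟩ · ⟨y, φ(ηη*)y⟩. -/
/-!
With `ψ T = B T B*` one has `⟪y, ψ (ηη*) y⟫ = |⟪y, B η⟫|²`, so after substituting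
`B η = λ^{-1/2} φ(ηξ*) x` and `⟪x, φ(ξξ*) x⟫ = λ` the right-hand side says exactly that `φ - ψ` is
positive on the rank-one operators `ηη*`. Conversely, for `T ≥ 0` put `ζ = B* y` and
`c = ⟪T ζ, ζ⟫ = ⟪y, ψ(T) y⟫`. Cauchy–Schwarz for `T` gives `(Tζ)(Tζ)* ≤ c T`; applying `φ` and the
rank-one inequality with `η = T ζ` yields `c² = |⟪y, B T ζ⟫|² ≤ c ⟪y, φ(T) y⟫`, hence
`c ≤ ⟪y, φ(T) y⟫`.
-/

/-- `rk1 ξ η` is the rank-one operator `ξη* : τ ↦ ⟨η, τ⟩ ξ`. -/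
noncomputable def rk1 {H : Type*} [NormedAddCommGroup H] [InnerProductSpace ℂ H]
    (ξ η : H) : H →L[ℂ] H := (innerSL ℂ η).smulRight ξ

/-- An operator `T` is positive if `⟨y, T y⟩ ≥ 0` for every `y`. -/
def PosOp {H : Type*} [NormedAddCommGroup H] [InnerProductSpace ℂ H]
    (T : H →L[ℂ] H) : Prop :=
  ∀ y : H, 0 ≤ (inner ℂ y (T y) : ℂ).re ∧ (inner ℂ y (T y) : ℂ).im = 0

open ContinuousLinearMap InnerProductSpace RCLike

lemma rk1_eq_rankOne {H : Type*} [NormedAddCommGroup H] [InnerProductSpace ℂ H] (ξ η : H) :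
    rk1 ξ η = rankOne ℂ ξ η := rfl

lemma posOp_iff_isPositive {H : Type*} [NormedAddCommGroup H] [InnerProductSpace ℂ H]
    (T : H →L[ℂ] H) : PosOp T ↔ T.IsPositive := by
  rw [isPositive_iff_complex]
  refine forall_congr' fun y => ?_
  rw [← inner_conj_symm, Complex.conj_re, Complex.conj_im, neg_eq_zero, and_comm,
    RCLike.re_to_complex, ← Complex.conj_eq_iff_re, Complex.conj_eq_iff_im]

namespace ContinuousLinearMap

variable {𝕜 E : Type*} [RCLike 𝕜] [NormedAddCommGroup E] [InnerProductSpace 𝕜 E]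

lemma _root_.InnerProductSpace.re_inner_rankOne_self_apply (a u : E) :
    re (inner 𝕜 (rankOne 𝕜 a a u) u) = ‖inner 𝕜 a u‖ ^ 2 := by
  rw [rankOne_apply, inner_smul_left, RCLike.conj_mul, ← ofReal_pow, ofReal_re]

lemma le_iff_forall_re_inner_le {S T : E →L[𝕜] E} (hS : S.IsSymmetric) (hT : T.IsSymmetric) :
    S ≤ T ↔ ∀ x, re (inner 𝕜 (S x) x) ≤ re (inner 𝕜 (T x) x) := by
  simp only [le_def, IsPositive, reApplyInnerSelf, sub_apply, inner_sub_left, map_sub, sub_nonneg]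
  exact and_iff_right (by simpa using hT.sub hS)

theorem IsPositive.norm_inner_sq_le {T : E →L[𝕜] E} (hT : T.IsPositive) (u v : E) :
    ‖inner 𝕜 (T u) v‖ ^ 2 ≤ re (inner 𝕜 (T u) u) * re (inner 𝕜 (T v) v) := by
  let c : PreInnerProductSpace.Core 𝕜 E :=
    { inner a b := inner 𝕜 (T a) b
      conj_inner_symm a b := by simp only [inner_conj_symm, hT.inner_left_eq_inner_right]
      re_inner_nonneg := hT.re_inner_nonneg_left
      add_left a b c := by simp only [map_add, inner_add_left]
      smul_left a b r := by simp only [map_smul, inner_smul_left] }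
  have h : ‖inner 𝕜 (T u) v‖ * ‖inner 𝕜 (T v) u‖ ≤
      re (inner 𝕜 (T u) u) * re (inner 𝕜 (T v) v) :=
    @InnerProductSpace.Core.inner_mul_inner_self_le 𝕜 E _ _ _ c u v
  rwa [norm_inner_symm (T v), ← hT.inner_left_eq_inner_right, ← sq] at h

theorem IsPositive.rankOne_le_smul {T : E →L[𝕜] E} (hT : T.IsPositive) (ζ : E) :
    rankOne 𝕜 (T ζ) (T ζ) ≤ (re (inner 𝕜 (T ζ) ζ) : 𝕜) • T := by
  rw [le_iff_forall_re_inner_le (isPositive_rankOne_self _).isSymmetric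
    (hT.smul_of_nonneg (ofReal_nonneg.2 (hT.re_inner_nonneg_left ζ))).isSymmetric]
  intro u
  rw [re_inner_rankOne_self_apply, smul_apply, inner_smul_left, conj_ofReal, re_ofReal_mul]
  exact hT.norm_inner_sq_le ζ u

end ContinuousLinearMap

section

variable {𝕜 K H : Type*} [RCLike 𝕜]
  [NormedAddCommGroup K] [InnerProductSpace 𝕜 K] [CompleteSpace K]
  [NormedAddCommGroup H] [InnerProductSpace 𝕜 H] [CompleteSpace H]

theorem conj_le_map_iff_norm_inner_sq_le {φ : (K →L[𝕜] K) →ₗ[𝕜] (H →L[𝕜] H)}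
    (hφ : ∀ T, 0 ≤ T → 0 ≤ φ T) (B : K →L[𝕜] H) :
    (∀ T, 0 ≤ T → B ∘L T ∘L adjoint B ≤ φ T) ↔
      ∀ η y, ‖inner 𝕜 y (B η)‖ ^ 2 ≤ re (inner 𝕜 (φ (rankOne 𝕜 η η) y) y) := by
  have hφpos T (hT : T.IsPositive) : (φ T).IsPositive :=
    (nonneg_iff_isPositive _).1 (hφ T ((nonneg_iff_isPositive _).2 hT))
  constructor
  · intro h η y
    have hη := isPositive_rankOne_self (𝕜 := 𝕜) η
    have hle := h _ ((nonneg_iff_isPositive _).2 hη)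
    rw [rankOne_comp, adjoint_adjoint, comp_rankOne,
      le_iff_forall_re_inner_le (isPositive_rankOne_self _).isSymmetric (hφpos _ hη).isSymmetric]
      at hle
    simpa only [re_inner_rankOne_self_apply, norm_inner_symm] using hle y
  · intro h T hT
    rw [nonneg_iff_isPositive] at hT
    rw [le_iff_forall_re_inner_le (hT.conj_adjoint B).isSymmetric (hφpos T hT).isSymmetric]
    intro y
    set ζ := adjoint B y
    set c := re (inner 𝕜 (T ζ) ζ)
    set a := re (inner 𝕜 (φ T y) y)
    have hc : 0 ≤ c := hT.re_inner_nonneg_left ζ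
    have ha : 0 ≤ a := (hφpos T hT).re_inner_nonneg_left y
    have hψ : re (inner 𝕜 ((B ∘L T ∘L adjoint B) y) y) = c := by
      rw [comp_apply, comp_apply, ← adjoint_inner_right]
    have hsq : c ^ 2 ≤ ‖inner 𝕜 y (B (T ζ))‖ ^ 2 := by
      rw [← adjoint_inner_left, ← inner_conj_symm, norm_conj]
      exact pow_le_pow_left₀ hc (re_le_norm _) 2
    have hmono : re (inner 𝕜 (φ (rankOne 𝕜 (T ζ) (T ζ)) y) y) ≤ c * a := by
      have h := (hφpos _ ((le_def _ _).1 (hT.rankOne_le_smul ζ))).re_inner_nonneg_left y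
      rwa [map_sub, map_smul, sub_apply, smul_apply, inner_sub_left, inner_smul_left, conj_ofReal,
        map_sub, re_ofReal_mul, sub_nonneg] at h
    have hca : c ^ 2 ≤ c * a := hsq.trans ((h (T ζ) y).trans hmono)
    rw [hψ]
    nlinarith

end

theorem stmt15_general {K H : Type*}
    [NormedAddCommGroup K] [InnerProductSpace ℂ K] [CompleteSpace K]
    [NormedAddCommGroup H] [InnerProductSpace ℂ H] [CompleteSpace H]
    (φ : (K →L[ℂ] K) →ₗ[ℂ] (H →L[ℂ] H))
    (hpos : ∀ T, PosOp T → PosOp (φ T))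
    (ξ : K) (x : H) (hx : ‖x‖ = 1)
    (l : ℝ) (hl : 0 < l) (heig : (φ (rk1 ξ ξ)) x = l • x)
    (B : K →L[ℂ] H)
    (hB : ∀ η : K, B η = (Real.sqrt l)⁻¹ • (φ (rk1 η ξ)) x) :
    (∀ T : K →L[ℂ] K, PosOp T →
        PosOp (φ T - B ∘L T ∘L ContinuousLinearMap.adjoint B)) ↔
      ∀ (η : K) (y : H),
        ‖(inner ℂ y ((φ (rk1 η ξ)) x) : ℂ)‖ ^ 2 ≤
          (inner ℂ x ((φ (rk1 ξ ξ)) x) : ℂ).re * (inner ℂ y ((φ (rk1 η η)) y) : ℂ).re := by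
  have hφ : ∀ T, 0 ≤ T → 0 ≤ φ T := by
    simpa only [nonneg_iff_isPositive, ← posOp_iff_isPositive] using hpos
  have hre_eig : (inner ℂ x ((φ (rk1 ξ ξ)) x) : ℂ).re = l := by
    rw [heig, RCLike.real_smul_eq_coe_smul (K := ℂ), inner_smul_right, inner_self_eq_norm_sq_to_K,
      hx]
    simp
  have hBη (η : K) (y : H) :
      ‖(inner ℂ y (B η) : ℂ)‖ ^ 2 = l⁻¹ * ‖(inner ℂ y ((φ (rk1 η ξ)) x) : ℂ)‖ ^ 2 := by
    rw [hB, RCLike.real_smul_eq_coe_smul (K := ℂ), inner_smul_right, norm_mul, mul_pow,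
      norm_ofReal, sq_abs, inv_pow, Real.sq_sqrt hl.le]
  simp only [posOp_iff_isPositive, ← nonneg_iff_isPositive, sub_nonneg, hre_eig]
  refine (conj_le_map_iff_norm_inner_sq_le hφ B).trans (forall₂_congr fun η y => ?_)
  rw [hBη, inv_mul_le_iff₀ hl, inner_re_symm, RCLike.re_to_complex, rk1_eq_rankOne η η]

theorem stmt15 {K H : Type*}
    [NormedAddCommGroup K] [InnerProductSpace ℂ K] [CompleteSpace K]
    [NormedAddCommGroup H] [InnerProductSpace ℂ H] [CompleteSpace H]
    (φ : (K →L[ℂ] K) →ₗ[ℂ] (H →L[ℂ] H))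
    (hpos : ∀ T, PosOp T → PosOp (φ T))
    (ξ : K) (x : H) (hξ : ‖ξ‖ = 1) (hx : ‖x‖ = 1)
    (l : ℝ) (hl : 0 < l) (heig : (φ (rk1 ξ ξ)) x = l • x)
    (B : K →L[ℂ] H)
    (hB : ∀ η : K, B η = (Real.sqrt l)⁻¹ • (φ (rk1 η ξ)) x) :
    (∀ T : K →L[ℂ] K, PosOp T →
        PosOp (φ T - B ∘L T ∘L ContinuousLinearMap.adjoint B)) ↔
      ∀ (η : K) (y : H),
        ‖(inner ℂ y ((φ (rk1 η ξ)) x) : ℂ)‖ ^ 2 ≤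
          (inner ℂ x ((φ (rk1 ξ ξ)) x) : ℂ).re * (inner ℂ y ((φ (rk1 η η)) y) : ℂ).re :=
  stmt15_general φ hpos ξ x hx l hl heig B hB
end

section
/- Let K, H be finite-dimensional complex Hilbert spaces and φ : B(K) → B(H) a nonzero 2-positive map that is extremal in the cone of positive maps. Then φ is completely positive. -/
open Matrix ComplexOrder

/-- A linear map between matrix algebras is positive if it maps positive
semidefinite matrices to positive semidefinite matrices. -/
def PosMap {n m : ℕ} (φ : Matrix (Fin n) (Fin n) ℂ →ₗ[ℂ] Matrix (Fin m) (Fin m) ℂ) : Prop :=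
  ∀ X : Matrix (Fin n) (Fin n) ℂ, X.PosSemidef → (φ X).PosSemidef

/-- `P` is a one-dimensional orthogonal projection. -/
def IsProj1 {n : ℕ} (P : Matrix (Fin n) (Fin n) ℂ) : Prop :=
  P.IsHermitian ∧ P * P = P ∧ P.rank = 1

/-- The ampliation `id ⊗ φ` applied blockwise to a `k × k` block matrix. -/
def amp {n m : ℕ} (k : ℕ) (φ : Matrix (Fin n) (Fin n) ℂ →ₗ[ℂ] Matrix (Fin m) (Fin m) ℂ)
    (M : Matrix (Fin k × Fin n) (Fin k × Fin n) ℂ) : Matrix (Fin k × Fin m) (Fin k × Fin m) ℂ :=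
  Matrix.of fun p q => φ (Matrix.of fun a b => M (p.1, a) (q.1, b)) p.2 q.2

/-- Complete positivity: all ampliations preserve positive semidefiniteness. -/
def CompletelyPositive {n m : ℕ}
    (φ : Matrix (Fin n) (Fin n) ℂ →ₗ[ℂ] Matrix (Fin m) (Fin m) ℂ) : Prop :=
  ∀ (k : ℕ) (M : Matrix (Fin k × Fin n) (Fin k × Fin n) ℂ),
    M.PosSemidef → (amp k φ M).PosSemidef

/-- Complete copositivity: `X ↦ φ(Xᵀ)` is completely positive. -/
def CompletelyCopositive {n m : ℕ}
    (φ : Matrix (Fin n) (Fin n) ℂ →ₗ[ℂ] Matrix (Fin m) (Fin m) ℂ) : Prop :=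
  ∀ (k : ℕ) (M : Matrix (Fin k × Fin n) (Fin k × Fin n) ℂ), M.PosSemidef →
    (Matrix.of fun p q : Fin k × Fin m =>
      φ (Matrix.of fun a b => M (p.1, b) (q.1, a)) p.2 q.2).PosSemidef

/-- `φ` is extremal in the cone of positive maps. -/
def IsExtremalPos {n m : ℕ}
    (φ : Matrix (Fin n) (Fin n) ℂ →ₗ[ℂ] Matrix (Fin m) (Fin m) ℂ) : Prop :=
  PosMap φ ∧ ∀ ψ, PosMap ψ → PosMap (φ - ψ) → ∃ l : ℝ, 0 ≤ l ∧ ψ = (l : ℂ) • φ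

/-- `φ` is decomposable: a sum of a completely positive and a completely
copositive map. -/
def Decomposable {n m : ℕ}
    (φ : Matrix (Fin n) (Fin n) ℂ →ₗ[ℂ] Matrix (Fin m) (Fin m) ℂ) : Prop :=
  ∃ φ₁ φ₂, CompletelyPositive φ₁ ∧ CompletelyCopositive φ₂ ∧ φ = φ₁ + φ₂

/-- A map is 2-positive if its ampliation to 2x2 block matrices is positive. -/
def TwoPositive {n m : ℕ}
    (φ : Matrix (Fin n) (Fin n) ℂ →ₗ[ℂ] Matrix (Fin m) (Fin m) ℂ) : Prop :=
  ∀ M : Matrix (Fin 2 × Fin n) (Fin 2 × Fin n) ℂ, M.PosSemidef → (amp 2 φ M).PosSemidef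

/-!
Pick `ξ, x` with `λ = ⟨x, φ(ξξ*) x⟩ > 0` and let `V η = φ(η ξ*) x`. Applying `φ₂` to the positive
block matrix built from `(η, ξ)` and using Cauchy–Schwarz gives
`|⟨y, V η⟩|² ≤ ⟨y, φ(ηη*) y⟩ λ`, i.e. the completely positive map `λ⁻¹ V (·) V*` lies below `φ`
in the cone of positive maps. By extremality it is a positive multiple of `φ`, so `φ` is
completely positive. The same inequality shows that such `ξ, x` exist as soon as `φ ≠ 0`.
-/
namespace Matrix

variable {I : Type*}

lemma mul_vecMulVec_star_mul_conjTranspose {J : Type*} [Fintype J] (B : Matrix I J ℂ)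
    (v : J → ℂ) : B * vecMulVec v (star v) * Bᴴ = vecMulVec (B *ᵥ v) (star (B *ᵥ v)) := by
  rw [mul_vecMulVec, vecMulVec_mul, vecMul_conjTranspose, star_star]

variable [Fintype I]

lemma dotProduct_vecMulVec_star_mulVec (v y : I → ℂ) :
    star y ⬝ᵥ vecMulVec v (star v) *ᵥ y = Complex.normSq (star y ⬝ᵥ v) := by
  rw [vecMulVec_mulVec, op_smul_eq_smul, dotProduct_smul, smul_eq_mul,
    Complex.normSq_eq_conj_mul_self, ← star_star y, star_dotProduct_star, star_star]
  rfl

lemma PosSemidef.normSq_dotProduct_mulVec_le {N : Matrix I I ℂ} (hN : N.PosSemidef)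
    (u w : I → ℂ) :
    Complex.normSq (star u ⬝ᵥ N *ᵥ w) ≤ (star u ⬝ᵥ N *ᵥ u).re * (star w ⬝ᵥ N *ᵥ w).re := by
  classical
  open scoped MatrixOrder in
  obtain ⟨B, rfl⟩ := CStarAlgebra.nonneg_iff_eq_star_mul_self.mp hN.nonneg
  have hinner (a b : I → ℂ) :
      star a ⬝ᵥ (star B * B) *ᵥ b =
        inner ℂ (WithLp.toLp 2 (B *ᵥ a)) (WithLp.toLp 2 (B *ᵥ b)) := by
    rw [EuclideanSpace.inner_toLp_toLp, dotProduct_comm (B *ᵥ b), ← mulVec_mulVec,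
      dotProduct_mulVec, star_eq_conjTranspose, vecMul_conjTranspose, star_star]
  simp only [hinner]
  rw [Complex.normSq_eq_norm_sq, sq]
  nth_rw 2 [norm_inner_symm]
  exact inner_mul_inner_self_le _ _

lemma PosSemidef.exists_eq_sum_vecMulVec_star {A : Matrix I I ℂ} (hA : A.PosSemidef) :
    ∃ u : I → I → ℂ, A = ∑ i, vecMulVec (u i) (star (u i)) := by
  classical
  open scoped MatrixOrder in
  obtain ⟨B, rfl⟩ := CStarAlgebra.nonneg_iff_eq_star_mul_self.mp hA.nonneg
  refine ⟨fun i => star (B i), ?_⟩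
  ext a b
  simp [sum_apply, vecMulVec, mul_apply]

lemma PosSemidef.sub_smul_vecMulVec_star {N : Matrix I I ℂ} (hN : N.PosSemidef) (v : I → ℂ)
    {c : ℝ} (hc : 0 ≤ c)
    (hle : ∀ y, c * Complex.normSq (star y ⬝ᵥ v) ≤ (star y ⬝ᵥ N *ᵥ y).re) :
    (N - (c : ℂ) • vecMulVec v (star v)).PosSemidef := by
  refine .of_dotProduct_mulVec_nonneg
    (hN.1.sub ((posSemidef_vecMulVec_self_star v).smul (by exact_mod_cast hc)).1) fun y => ?_
  have hNy := Complex.nonneg_iff.mp (hN.dotProduct_mulVec_nonneg y)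
  rw [sub_mulVec, dotProduct_sub, smul_mulVec, dotProduct_smul,
    dotProduct_vecMulVec_star_mulVec, Complex.nonneg_iff]
  constructor
  · simpa using hle y
  · simpa using hNy.2

lemma star_uncurry_single_dotProduct_mulVec {ι J : Type*} [Fintype ι] [DecidableEq ι]
    [Fintype J] (N : Matrix (ι × I) (ι × J) ℂ) (i j : ι) (y : I → ℂ) (x : J → ℂ) :
    star (Function.uncurry (Pi.single i y)) ⬝ᵥ N *ᵥ Function.uncurry (Pi.single j x) =
      star y ⬝ᵥ N.submatrix (Prod.mk i) (Prod.mk j) *ᵥ x := by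
  simp [dotProduct, mulVec, Fintype.sum_prod_type, Pi.single_apply, ite_apply,
    apply_ite (starRingEnd ℂ), ite_mul, Finset.sum_ite_eq']

end Matrix

open Matrix

section Maps

variable {n m : ℕ}

def conjMap (V : Matrix (Fin m) (Fin n) ℂ) :
    Matrix (Fin n) (Fin n) ℂ →ₗ[ℂ] Matrix (Fin m) (Fin m) ℂ where
  toFun A := V * A * Vᴴ
  map_add' A B := by rw [Matrix.mul_add, Matrix.add_mul]
  map_smul' c A := by rw [Matrix.mul_smul, Matrix.smul_mul]; rfl

@[simp]
lemma conjMap_apply (V : Matrix (Fin m) (Fin n) ℂ) (A : Matrix (Fin n) (Fin n) ℂ) :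
    conjMap V A = V * A * Vᴴ := rfl

open scoped Kronecker in
lemma amp_conjMap (k : ℕ) (V : Matrix (Fin m) (Fin n) ℂ)
    (M : Matrix (Fin k × Fin n) (Fin k × Fin n) ℂ) :
    amp k (conjMap V) M =
      ((1 : Matrix (Fin k) (Fin k) ℂ) ⊗ₖ V) * M * ((1 : Matrix (Fin k) (Fin k) ℂ) ⊗ₖ V)ᴴ := by
  ext ⟨i, s⟩ ⟨j, t⟩
  simp [amp, mul_apply, one_apply, Fintype.sum_prod_type, ite_mul, mul_ite,
    apply_ite (starRingEnd ℂ)]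

lemma posMap_conjMap (V : Matrix (Fin m) (Fin n) ℂ) : PosMap (conjMap V) :=
  fun _ hA => hA.mul_mul_conjTranspose_same V

lemma completelyPositive_conjMap (V : Matrix (Fin m) (Fin n) ℂ) :
    CompletelyPositive (conjMap V) := fun k M hM => by
  rw [amp_conjMap]
  exact hM.mul_mul_conjTranspose_same _

variable {φ ψ : Matrix (Fin n) (Fin n) ℂ →ₗ[ℂ] Matrix (Fin m) (Fin m) ℂ}

lemma PosMap.smul (hφ : PosMap φ) {c : ℝ} (hc : 0 ≤ c) : PosMap ((c : ℂ) • φ) :=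
  fun X hX => (hφ X hX).smul (by exact_mod_cast hc)

lemma CompletelyPositive.smul (hφ : CompletelyPositive φ) {c : ℝ} (hc : 0 ≤ c) :
    CompletelyPositive ((c : ℂ) • φ) :=
  fun k M hM => (hφ k M hM).smul (a := (c : ℂ)) (by exact_mod_cast hc)

lemma PosMap.of_vecMulVec (h : ∀ v, (φ (vecMulVec v (star v))).PosSemidef) : PosMap φ := by
  intro A hA
  obtain ⟨u, rfl⟩ := hA.exists_eq_sum_vecMulVec_star
  rw [map_sum]
  exact posSemidef_sum _ fun i _ => h (u i)

lemma TwoPositive.normSq_dotProduct_le (h2 : TwoPositive φ) (η ξ : Fin n → ℂ)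
    (y x : Fin m → ℂ) :
    Complex.normSq (star y ⬝ᵥ φ (vecMulVec η (star ξ)) *ᵥ x) ≤
      (star y ⬝ᵥ φ (vecMulVec η (star η)) *ᵥ y).re *
        (star x ⬝ᵥ φ (vecMulVec ξ (star ξ)) *ᵥ x).re := by
  let w : Fin 2 × Fin n → ℂ := Function.uncurry ![η, ξ]
  have hblock (i j : Fin 2) :
      (amp 2 φ (vecMulVec w (star w))).submatrix (Prod.mk i) (Prod.mk j) =
        φ (vecMulVec (![η, ξ] i) (star (![η, ξ] j))) := rfl
  have hcs := (h2 _ (posSemidef_vecMulVec_self_star w)).normSq_dotProduct_mulVec_le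
    (Function.uncurry (Pi.single 0 y)) (Function.uncurry (Pi.single 1 x))
  simpa only [star_uncurry_single_dotProduct_mulVec, hblock, cons_val_zero, cons_val_one] using hcs

lemma TwoPositive.exists_re_dotProduct_pos (h2 : TwoPositive φ) (hφ : PosMap φ) (hne : φ ≠ 0) :
    ∃ ξ x, 0 < (star x ⬝ᵥ φ (vecMulVec ξ (star ξ)) *ᵥ x).re := by
  by_contra! hle
  have hform (η ξ y x) : star y ⬝ᵥ φ (vecMulVec η (star ξ)) *ᵥ x = 0 := by
    have hy : 0 ≤ (star y ⬝ᵥ φ (vecMulVec η (star η)) *ᵥ y).re :=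
      (Complex.nonneg_iff.mp
        ((hφ _ (posSemidef_vecMulVec_self_star η)).dotProduct_mulVec_nonneg y)).1
    refine Complex.normSq_eq_zero.mp (le_antisymm ?_ (Complex.normSq_nonneg _))
    exact (h2.normSq_dotProduct_le η ξ y x).trans (mul_nonpos_of_nonneg_of_nonpos hy (hle ξ x))
  refine hne (Matrix.ext_linearMap ℂ fun a b => LinearMap.ext_ring ?_)
  ext i j
  simpa [single_eq_single_vecMulVec_single] using
    hform (Pi.single a 1) (Pi.single b 1) (Pi.single i 1) (Pi.single j 1)


variable (φ) in
def sliceMatrix (ξ : Fin n → ℂ) (x : Fin m → ℂ) : Matrix (Fin m) (Fin n) ℂ :=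
  LinearMap.toMatrix' ((mulVecBilin ℂ ℂ).flip x ∘ₗ φ ∘ₗ (vecMulVecBilin ℂ ℂ).flip (star ξ))

lemma sliceMatrix_mulVec (ξ η : Fin n → ℂ) (x : Fin m → ℂ) :
    sliceMatrix φ ξ x *ᵥ η = φ (vecMulVec η (star ξ)) *ᵥ x := by
  simp [sliceMatrix]

lemma TwoPositive.posMap_sub_smul_conjMap_sliceMatrix (h2 : TwoPositive φ) (hφ : PosMap φ)
    {ξ : Fin n → ℂ} {x : Fin m → ℂ} (hx : 0 < (star x ⬝ᵥ φ (vecMulVec ξ (star ξ)) *ᵥ x).re) :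
    PosMap (φ - (((star x ⬝ᵥ φ (vecMulVec ξ (star ξ)) *ᵥ x).re⁻¹ : ℝ) : ℂ) •
      conjMap (sliceMatrix φ ξ x)) := by
  refine PosMap.of_vecMulVec fun η => ?_
  simp only [LinearMap.sub_apply, LinearMap.smul_apply, conjMap_apply,
    mul_vecMulVec_star_mul_conjTranspose]
  refine (hφ _ (posSemidef_vecMulVec_self_star η)).sub_smul_vecMulVec_star _ (inv_nonneg.2 hx.le)
    fun y => ?_
  rw [sliceMatrix_mulVec, inv_mul_le_iff₀ hx, mul_comm]
  exact h2.normSq_dotProduct_le η ξ y x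

lemma conjMap_sliceMatrix_ne_zero {ξ : Fin n → ℂ} {x : Fin m → ℂ}
    (hx : 0 < (star x ⬝ᵥ φ (vecMulVec ξ (star ξ)) *ᵥ x).re) :
    conjMap (sliceMatrix φ ξ x) ≠ 0 := by
  intro h
  have h0 := congrArg (fun ψ => star x ⬝ᵥ ψ (vecMulVec ξ (star ξ)) *ᵥ x) h
  simp only [conjMap_apply, mul_vecMulVec_star_mul_conjTranspose,
    dotProduct_vecMulVec_star_mulVec, sliceMatrix_mulVec, LinearMap.zero_apply, zero_mulVec,
    dotProduct_zero, Complex.ofReal_eq_zero, Complex.normSq_eq_zero] at h0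
  simp [h0] at hx

lemma IsExtremalPos.completelyPositive_of_le (hφ : IsExtremalPos φ) (hψ : PosMap ψ)
    (hψcp : CompletelyPositive ψ) (hψ0 : ψ ≠ 0) (hle : PosMap (φ - ψ)) :
    CompletelyPositive φ := by
  obtain ⟨l, hl, rfl⟩ := hφ.2 ψ hψ hle
  have hl0 : (l : ℂ) ≠ 0 := by
    rintro h
    exact hψ0 (by rw [h, zero_smul])
  have : φ = ((l⁻¹ : ℝ) : ℂ) • (l : ℂ) • φ := by
    rw [smul_smul, Complex.ofReal_inv, inv_mul_cancel₀ hl0, one_smul]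
  rw [this]
  exact hψcp.smul (inv_nonneg.2 hl)

end Maps

theorem stmt16 {n m : ℕ}
    (φ : Matrix (Fin n) (Fin n) ℂ →ₗ[ℂ] Matrix (Fin m) (Fin m) ℂ)
    (hne : φ ≠ 0) (h2 : TwoPositive φ) (hext : IsExtremalPos φ) :
    CompletelyPositive φ := by
  obtain ⟨ξ, x, hx⟩ := h2.exists_re_dotProduct_pos hext.1 hne
  have hc : 0 ≤ (star x ⬝ᵥ φ (vecMulVec ξ (star ξ)) *ᵥ x).re⁻¹ := inv_nonneg.2 hx.le
  exact hext.completelyPositive_of_le ((posMap_conjMap _).smul hc)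
    ((completelyPositive_conjMap _).smul hc)
    (smul_ne_zero (by exact_mod_cast (inv_pos.2 hx).ne') (conjMap_sliceMatrix_ne_zero hx))
    (h2.posMap_sub_smul_conjMap_sliceMatrix hext.1 hx)
end
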